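/- Let N ≥ 2 and p = 2N/(N + 1) (the critical exponent). There exists a constant c > 0, depending only on N, such that the function u(x, t) := (e^{c·t} + ‖x‖^{2N/(N−1)})^{−(N−1)/2} satisfies the parabolic p-Laplace equation ∂_t u(x, t) = div_x(‖∇_x u(x,t)‖^{p−2}·∇_x u(x,t)) pointwise at every (x, t) ∈ ℝ^N × ℝ with x ≠ 0. -/

import Mathlib

open Real InnerProductSpace

lemma key_fderiv {N : ℕ} (E α β : ℝ) (hE : 0 < E)
    (z : EuclideanSpace ℝ (Fin N)) (hz : z ≠ 0) :
    HasFDerivAt (fun w : EuclideanSpace ℝ (Fin N) => (E + ‖w‖ ^ α) ^ (-β))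
      ((-β * (E + ‖z‖ ^ α) ^ (-β - 1) * α * ‖z‖ ^ (α - 2)) • (innerSL ℝ z)) z := by
  have hzn : (0:ℝ) < ‖z‖ := norm_pos_iff.mpr hz
  set s : ℝ := ‖z‖ ^ (2:ℕ) with hs_def
  have hs : 0 < s := by positivity
  have hg0 : (0:ℝ) < E + s ^ (α/2) := by positivity
  have h1 : HasFDerivAt (fun w : EuclideanSpace ℝ (Fin N) => ‖w‖ ^ (2:ℕ))
      ((2:ℕ) • innerSL ℝ z) z :=
    (hasStrictFDerivAt_norm_sq z).hasFDerivAt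
  have h2 : HasDerivAt (fun u : ℝ => E + u ^ (α/2)) ((α/2) * s ^ (α/2 - 1)) s := by
    simpa [mul_comm] using
      ((Real.hasDerivAt_rpow_const (p := α/2) (Or.inl hs.ne'))).const_add E
  have h3 : HasDerivAt (fun u : ℝ => u ^ (-β)) (-β * (E + s ^ (α/2)) ^ (-β - 1))
      (E + s ^ (α/2)) := by
    simpa [mul_comm] using Real.hasDerivAt_rpow_const
      (x := E + s ^ (α/2)) (p := -β) (Or.inl hg0.ne')
  have h4 : HasDerivAt (fun u : ℝ => (E + u ^ (α/2)) ^ (-β))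
      ((-β * (E + s ^ (α/2)) ^ (-β - 1)) * ((α/2) * s ^ (α/2 - 1))) s := by
    have := h3.comp s h2; exact this
  have h5 := h4.comp_hasFDerivAt z h1
  have hnorm : ∀ w : EuclideanSpace ℝ (Fin N), ((‖w‖ ^ (2:ℕ) : ℝ)) ^ (α/2) = ‖w‖ ^ α := by
    intro w
    rw [← Real.rpow_natCast ‖w‖ 2, ← Real.rpow_mul (norm_nonneg w)]
    congr 1; ring
  have hnorm2 : (s : ℝ) ^ (α/2 - 1) = ‖z‖ ^ (α - 2) := by
    rw [hs_def, ← Real.rpow_natCast ‖z‖ 2, ← Real.rpow_mul (norm_nonneg z)]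
    ring_nf
  have hfun : (fun w : EuclideanSpace ℝ (Fin N) => (E + (‖w‖ ^ (2:ℕ) : ℝ) ^ (α/2)) ^ (-β))
      = fun w => (E + ‖w‖ ^ α) ^ (-β) := by
    funext w; rw [hnorm w]
  rw [Function.comp_def] at h5
  rw [hfun] at h5
  refine h5.congr_fderiv ?_
  ext v
  simp only [ContinuousLinearMap.smul_apply, ContinuousLinearMap.coe_smul', Pi.smul_apply,
    smul_eq_mul, hnorm z, hnorm2]
  rw [hs_def, hnorm z, nsmul_eq_mul]
  ring

lemma key_grad {N : ℕ} (E α β : ℝ) (hE : 0 < E)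
    (z : EuclideanSpace ℝ (Fin N)) (hz : z ≠ 0) :
    gradient (fun w : EuclideanSpace ℝ (Fin N) => (E + ‖w‖ ^ α) ^ (-β)) z
      = (-β * (E + ‖z‖ ^ α) ^ (-β - 1) * α * ‖z‖ ^ (α - 2)) • z := by
  have h := key_fderiv E α β hE z hz
  have : HasGradientAt (fun w : EuclideanSpace ℝ (Fin N) => (E + ‖w‖ ^ α) ^ (-β))
      ((-β * (E + ‖z‖ ^ α) ^ (-β - 1) * α * ‖z‖ ^ (α - 2)) • z) z := by
    rw [hasGradientAt_iff_hasFDerivAt]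
    refine h.congr_fderiv ?_
    ext v
    simp [InnerProductSpace.toDual_apply_apply, inner_smul_left]
  exact this.gradient

lemma scalarA (n g r : ℝ) (hn : 2 ≤ n) (hg : 0 < g) (hr : 0 < r) :
    ((((n-1)/2)*(2*n/(n-1))*g^(-((n-1)/2)-1)*r^((2*n/(n-1))-2)) * r)^((2*n/(n+1))-2)
      * (-((((n-1)/2)*(2*n/(n-1))*g^(-((n-1)/2)-1)*r^((2*n/(n-1))-2))))
    = -(n^((2*n/(n+1))-1) * g^(-((n-1)/2))) := by
  have hn1 : (0:ℝ) < n - 1 := by linarith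
  have hn2 : (0:ℝ) < n + 1 := by linarith
  have hn0 : (0:ℝ) < n := by linarith
  set α := 2*n/(n-1) with hα
  set β := (n-1)/2 with hβ
  set p := 2*n/(n+1) with hp
  have hβα : β * α = n := by rw [hβ, hα]; field_simp
  have hβ0 : 0 < β := by rw [hβ]; positivity
  have hα0 : 0 < α := by rw [hα]; positivity
  have hgp : (0:ℝ) < g^(-β-1) := rpow_pos_of_pos hg _
  have hrp : (0:ℝ) < r^(α-2) := rpow_pos_of_pos hr _
  set k := β*α*g^(-β-1)*r^(α-2) with hk_def
  have hk : 0 < k := by positivity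
  have ek : k^(p-2) * k = k^(p-1) := by
    nth_rewrite 2 [← Real.rpow_one k]
    rw [← Real.rpow_add hk]
    ring_nf
  have e1 : (k*r)^(p-2) * (-k) = -(k^(p-1) * r^(p-2)) := by
    rw [Real.mul_rpow hk.le hr.le]
    rw [show k ^ (p - 2) * r ^ (p - 2) * -k = -(k^(p-2)*k * r^(p-2)) by ring, ek]
  rw [e1]
  have e2 : k^(p-1) = n^(p-1) * g^((-β-1)*(p-1)) * r^((α-2)*(p-1)) := by
    rw [hk_def, hβα, Real.mul_rpow (by positivity) hrp.le,
      Real.mul_rpow hn0.le hgp.le, ← Real.rpow_mul hg.le, ← Real.rpow_mul hr.le]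
  rw [e2]
  have e3 : (-β-1)*(p-1) = -β := by rw [hβ, hp]; field_simp; ring
  have e4 : r^((α-2)*(p-1)) * r^(p-2) = 1 := by
    rw [← Real.rpow_add hr]
    have : (α-2)*(p-1) + (p-2) = 0 := by rw [hα, hp]; field_simp; ring
    rw [this, Real.rpow_zero]
  rw [e3]
  rw [show -(n ^ (p - 1) * g ^ (-β) * r ^ ((α - 2) * (p - 1)) * r ^ (p - 2))
      = -(n ^ (p - 1) * g ^ (-β) * (r ^ ((α - 2) * (p - 1)) * r ^ (p - 2))) by ring, e4, mul_one]

lemma scalarB (n E r : ℝ) (hn : 2 ≤ n) (hE : 0 < E) (hr : 0 < r) :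
    n * (-(n^((2*n/(n+1))-1) * (E + r^(2*n/(n-1)))^(-((n-1)/2))))
      + (n^((2*n/(n+1))-1)*((n-1)/2)*(2*n/(n-1))
          *(E + r^(2*n/(n-1)))^(-((n-1)/2)-1)*r^((2*n/(n-1))-2)) * r^(2:ℝ)
    = (2*n/(n-1)) * n^((2*n/(n+1))-1) * E * (-((n-1)/2))
        * (E + r^(2*n/(n-1)))^(-((n-1)/2)-1) := by
  have hn1 : (0:ℝ) < n - 1 := by linarith
  have hn0 : (0:ℝ) < n := by linarith
  set α := 2*n/(n-1) with hα
  set β := (n-1)/2 with hβ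
  set C := n^((2*n/(n+1))-1) with hC
  set g := E + r^α with hg_def
  have hg : 0 < g := by rw [hg_def]; positivity
  have hβα : β * α = n := by rw [hβ, hα]; field_simp
  have er : r^(α-2) * r^(2:ℝ) = g - E := by
    rw [← Real.rpow_add hr]
    ring_nf
    rw [hg_def]; ring
  have eg : g^(-β) = g^(-β-1) * g := by
    nth_rewrite 3 [← Real.rpow_one g]
    rw [← Real.rpow_add hg]
    ring_nf
  set G := g^(-β-1) with hG
  rw [eg, show (C*β*α*G*r^(α-2)) * r^(2:ℝ) = (C*β*α*G)*(r^(α-2) * r^(2:ℝ)) by ring, er]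
  linear_combination (C*G*(g-E) + C*E*G)*hβα


/-- The divergence of a vector field `F : ℝ^N → ℝ^N` at `x`: the trace of its Jacobian. -/
noncomputable def divergence {N : ℕ}
    (F : EuclideanSpace ℝ (Fin N) → EuclideanSpace ℝ (Fin N))
    (x : EuclideanSpace ℝ (Fin N)) : ℝ :=
  ∑ i, fderiv ℝ F x (EuclideanSpace.single i 1) i

/-- The `p`-Laplacian flux `‖∇f‖^{p-2} ∇f` of a scalar function `f : ℝ^N → ℝ`. -/
noncomputable def pFlux {N : ℕ} (p : ℝ) (f : EuclideanSpace ℝ (Fin N) → ℝ)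
    (y : EuclideanSpace ℝ (Fin N)) : EuclideanSpace ℝ (Fin N) :=
  ‖gradient f y‖ ^ (p - 2) • gradient f y

/-- At the critical exponent `p = 2N/(N+1)` there is `c > 0`, depending only on `N`,
such that `u(x,t) = (e^{ct} + ‖x‖^{2N/(N-1)})^{-(N-1)/2}` is an eternal solution of the
parabolic `p`-Laplace equation, pointwise for `x ≠ 0`. -/
theorem critical_eternal_solution (N : ℕ) (hN : 2 ≤ N) :
    ∃ c : ℝ, 0 < c ∧
      ∀ (x : EuclideanSpace ℝ (Fin N)) (t : ℝ), x ≠ 0 →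
        deriv (fun s : ℝ =>
            (Real.exp (c * s) + ‖x‖ ^ (2 * (N : ℝ) / ((N : ℝ) - 1))) ^
              (-((N : ℝ) - 1) / 2)) t =
          divergence
            (pFlux (2 * (N : ℝ) / ((N : ℝ) + 1))
              (fun z : EuclideanSpace ℝ (Fin N) =>
                (Real.exp (c * t) + ‖z‖ ^ (2 * (N : ℝ) / ((N : ℝ) - 1))) ^
                  (-((N : ℝ) - 1) / 2))) x := by
  set n := (N:ℝ) with hn_def
  have hn : (2:ℝ) ≤ n := by rw [hn_def]; exact_mod_cast hN
  have hn1 : (0:ℝ) < n - 1 := by linarith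
  have hn0 : (0:ℝ) < n := by linarith
  rw [show -(n-1)/2 = -((n-1)/2) by ring]
  set p := 2*n/(n+1) with hp_def
  set α := 2*n/(n-1) with hα_def
  set β := (n-1)/2 with hβ_def
  set C := n^(p-1) with hC_def
  have hC : 0 < C := by rw [hC_def]; positivity
  have hα0 : 0 < α := by rw [hα_def]; positivity
  have hβ0 : 0 < β := by rw [hβ_def]; positivity
  refine ⟨α * C, by positivity, ?_⟩
  intro x t hx
  have hr : (0:ℝ) < ‖x‖ := norm_pos_iff.mpr hx
  set E := Real.exp (α * C * t) with hE_def
  have hE : (0:ℝ) < E := Real.exp_pos _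
  set g := E + ‖x‖ ^ α with hg_def
  have hg : 0 < g := by rw [hg_def]; positivity
  -- left-hand side
  have hder : HasDerivAt (fun s : ℝ => (Real.exp (α*C*s) + ‖x‖^α) ^ (-β))
      ((α*C*E) * (-β) * g^(-β-1)) t := by
    have h1 : HasDerivAt (fun s : ℝ => Real.exp (α*C*s)) (α*C*E) t := by
      have := ((hasDerivAt_id t).const_mul (α*C)).exp
      simpa [hE_def, mul_comm] using this
    have h2 := h1.add_const (‖x‖^α)
    have h3 := h2.rpow_const (p := -β) (Or.inl (by rw [hg_def] at hg; positivity))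
    simpa [hg_def] using h3
  rw [hder.deriv]
  -- the flux equals a nice vector field V away from the origin
  set f := fun z : EuclideanSpace ℝ (Fin N) => (E + ‖z‖ ^ α) ^ (-β) with hf_def
  set V := fun z : EuclideanSpace ℝ (Fin N) => (-(C * (E + ‖z‖ ^ α) ^ (-β))) • z with hV_def
  have hflux : ∀ z : EuclideanSpace ℝ (Fin N), z ≠ 0 → pFlux p f z = V z := by
    intro z hz
    have hrz : (0:ℝ) < ‖z‖ := norm_pos_iff.mpr hz
    have hgz : (0:ℝ) < E + ‖z‖ ^ α := by positivity
    rw [pFlux, key_grad E α β hE z hz]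
    set k := -β * (E + ‖z‖ ^ α) ^ (-β-1) * α * ‖z‖ ^ (α-2) with hk_def
    have hk' : k = -(β*α*(E + ‖z‖ ^ α)^(-β-1)*‖z‖^(α-2)) := by rw [hk_def]; ring
    have hknorm : ‖k • z‖ = (β*α*(E + ‖z‖ ^ α)^(-β-1)*‖z‖^(α-2)) * ‖z‖ := by
      rw [norm_smul, Real.norm_eq_abs, hk', abs_neg, abs_of_pos (by positivity)]
    rw [hknorm, smul_smul, hV_def]
    congr 1
    have := scalarA n (E + ‖z‖ ^ α) ‖z‖ hn hgz hrz
    rw [← hα_def, ← hβ_def, ← hp_def, ← hC_def] at this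
    rw [hk']
    linear_combination this
  -- fderiv of V at x
  have hL := key_fderiv E α β hE x hx
  set D := -β * (E + ‖x‖ ^ α) ^ (-β-1) * α * ‖x‖ ^ (α-2) with hD_def
  have hψ : HasFDerivAt (fun z : EuclideanSpace ℝ (Fin N) => -(C * (E + ‖z‖ ^ α) ^ (-β)))
      ((-C) • (D • innerSL ℝ x)) x := by
    simpa [neg_mul] using hL.const_mul (-C)
  have hVd : HasFDerivAt V ((-(C * (E + ‖x‖ ^ α) ^ (-β))) • ContinuousLinearMap.id ℝ _
      + ((-C) • (D • innerSL ℝ x)).smulRight x) x := hψ.smul (hasFDerivAt_id x)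
  have hmem : {(0:EuclideanSpace ℝ (Fin N))}ᶜ ∈ nhds x := isOpen_compl_singleton.mem_nhds hx
  have heq : pFlux p f =ᶠ[nhds x] V := Filter.eventuallyEq_of_mem hmem (fun z hz => hflux z hz)
  rw [divergence, heq.fderiv_eq, hVd.fderiv]
  simp only [ContinuousLinearMap.add_apply, ContinuousLinearMap.smul_apply,
    ContinuousLinearMap.id_apply, ContinuousLinearMap.smulRight_apply, innerSL_apply_apply,
    PiLp.add_apply, PiLp.smul_apply, smul_eq_mul, EuclideanSpace.single_apply,
    EuclideanSpace.inner_single_right, conj_trivial]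
  simp only [ite_true, mul_one, one_mul]
  have hterm : ∀ i : Fin N, -(C * (E + ‖x‖ ^ α) ^ (-β)) + -C * (D * x i) * x i
      = -(C * (E + ‖x‖ ^ α) ^ (-β)) + (-C*D) * (x i * x i) := fun i => by ring
  rw [Finset.sum_congr rfl (fun i _ => hterm i), Finset.sum_add_distrib, Finset.sum_const,
    Finset.card_univ, Fintype.card_fin, ← Finset.mul_sum]
  have hsum : ∑ i, x i * x i = ‖x‖ ^ (2:ℝ) := by
    have h1 : ∑ i, x i * x i = ‖x‖ ^ (2:ℕ) := by
      rw [← real_inner_self_eq_norm_sq]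
      simp only [PiLp.inner_apply, RCLike.inner_apply, conj_trivial]
    rw [h1, ← Real.rpow_natCast ‖x‖ 2]
    norm_num
  rw [hsum, nsmul_eq_mul, hg_def, hD_def]
  have hB := scalarB n E ‖x‖ hn hE hr
  rw [← hα_def, ← hβ_def, ← hp_def, ← hC_def] at hB
  linear_combination -hB
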